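/- arXiv:2102.04657 — 3 statements merged into one kernel-verified Lean document; each statement's English description precedes it below -/
import Mathlib

section
/- Let K be an algebraically closed field and let M_r ⊆ K^{m×n} be the variety of matrices of rank at most r. For any matrix A ∈ M_r with rank(A) = r, the tangent space to M_r at A is T_A M_r = {CA + AC' : C ∈ K^{m×m}, C' ∈ K^{n×n}}. -/
open scoped BigOperators

/-- `SliceRankLE T r` : the 3-tensor `T` has slice rank at most `r`. -/
def SliceRankLE {F : Type*} [Field F] {n1 n2 n3 : ℕ}
    (T : Fin n1 → Fin n2 → Fin n3 → F) (r : ℕ) : Prop :=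
  ∃ r1 r2 r3 : ℕ, r1 + r2 + r3 = r ∧
    ∃ (a : Fin r1 → Fin n1 → F) (g1 : Fin r1 → Fin n2 → Fin n3 → F)
      (b : Fin r2 → Fin n2 → F) (g2 : Fin r2 → Fin n1 → Fin n3 → F)
      (c : Fin r3 → Fin n3 → F) (g3 : Fin r3 → Fin n1 → Fin n2 → F),
      ∀ i j k, T i j k =
        (∑ s, a s i * g1 s j k) + (∑ s, b s j * g2 s i k) + (∑ s, c s k * g3 s i j)

/-- The slice rank of a 3-tensor. -/
noncomputable def sliceRank {F : Type*} [Field F] {n1 n2 n3 : ℕ}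
    (T : Fin n1 → Fin n2 → Fin n3 → F) : ℕ :=
  sInf {r | SliceRankLE T r}

/-- Dimension of an affine algebraic set: Krull dimension of its coordinate ring. -/
noncomputable def varietyDim {K : Type*} [Field K] {σ : Type*} (V : Set (σ → K)) : ℕ :=
  ENat.toNat (WithBot.unbotD 0 (ringKrullDim (MvPolynomial σ K ⧸ MvPolynomial.vanishingIdeal K V)))

/-- The kernel variety of the bilinear map corresponding to a 3-tensor,
over the algebraic closure. -/
def kerSet {F : Type*} [Field F] {n1 n2 n3 : ℕ}
    (T : Fin n1 → Fin n2 → Fin n3 → F) :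
    Set ((Fin n1 ⊕ Fin n2) → AlgebraicClosure F) :=
  {w | ∀ k : Fin n3,
    ∑ i : Fin n1, ∑ j : Fin n2,
      algebraMap F (AlgebraicClosure F) (T i j k) * w (Sum.inl i) * w (Sum.inr j) = 0}

/-- The geometric rank of a 3-tensor. -/
noncomputable def geoRank {F : Type*} [Field F] {n1 n2 n3 : ℕ}
    (T : Fin n1 → Fin n2 → Fin n3 → F) : ℕ :=
  n1 + n2 - varietyDim (kerSet T)

/-- The analytic rank of a 3-tensor over a finite field, w.r.t. an additive character χ. -/
noncomputable def analyticRank {F : Type*} [Field F] [Fintype F] {n1 n2 n3 : ℕ}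
    (χ : AddChar F ℂ) (T : Fin n1 → Fin n2 → Fin n3 → F) : ℝ :=
  - Real.logb (Fintype.card F)
      (((∑ x : Fin n1 → F, ∑ y : Fin n2 → F, ∑ z : Fin n3 → F,
          χ (∑ i, ∑ j, ∑ k, T i j k * x i * y j * z k)) /
        ((Fintype.card F : ℂ) ^ (n1 + n2 + n3))).re)

/-- The tangent space of a (sub)set `V ⊆ K^σ` at a point `p`. -/
def tangentSpaceAt (K : Type*) [Field K] {σ : Type*} [Fintype σ] [DecidableEq σ]
    (V : Set (σ → K)) (p : σ → K) : Set (σ → K) :=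
  {v | ∀ g ∈ MvPolynomial.vanishingIdeal K V,
    ∑ i, v i * MvPolynomial.eval p (MvPolynomial.pderiv i g) = 0}

/-- `matrixSRLE L r`: the matrix space `L` has slice rank at most `r`; the slice rank of
a matrix space is the slice rank of the 3-tensor obtained from any basis of `L`. -/
def matrixSRLE {K : Type*} [Field K] {m n : ℕ}
    (L : Submodule K (Matrix (Fin m) (Fin n) K)) (r : ℕ) : Prop :=
  ∀ (d : ℕ) (B : Fin d → Matrix (Fin m) (Fin n) K),
    LinearIndependent K B → Submodule.span K (Set.range B) = L →
      SliceRankLE (fun i j k => B k i j) r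

/-- The slice rank of a matrix space. -/
noncomputable def matrixSliceRank {K : Type*} [Field K] {m n : ℕ}
    (L : Submodule K (Matrix (Fin m) (Fin n) K)) : ℕ :=
  sInf {r | matrixSRLE L r}

/-- The min-entropy of a map between finite sets (inputs uniform at random). -/
noncomputable def minEntropy {A B : Type*} [Fintype A] [Fintype B] [DecidableEq B]
    (X : A → B) : ℝ :=
  - Real.logb 2
      (((Finset.univ.sup fun b => (Finset.univ.filter fun a => X a = b).card : ℕ) : ℝ) /
        (Fintype.card A : ℝ))

/-- The Levi-Civita tensor: the 3-tensor of the 3×3 determinant polynomial. -/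
def leviCivita (F : Type*) [Field F] : Fin 3 → Fin 3 → Fin 3 → F := fun i j k =>
  if (i, j, k) = (0, 1, 2) ∨ (i, j, k) = (1, 2, 0) ∨ (i, j, k) = (2, 0, 1) then 1
  else if (i, j, k) = (2, 1, 0) ∨ (i, j, k) = (1, 0, 2) ∨ (i, j, k) = (0, 2, 1) then -1
  else 0

/-!
A polynomial curve `γ` in `M_r` has its velocity `γ'(0)` in the tangent space at `γ(0)`: for `g` in
the ideal of `M_r` the polynomial `g ∘ γ` vanishes on the infinite field `K`, and the chain rule
reads its linear coefficient as the directional derivative of `g`. The curves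
`(1 + tC) A (1 + tC')` give every `CA + AC'`. Conversely, if `eA = 0` and `Af = 0`, bordering a
normal form `R₁ A S₁ = 1` by `e` and `f` gives an `(r+1)`-minor `det (R X S)` whose derivative at
`A` in the direction `V` is `e V f`; so `e V f = 0` for every tangent vector `V`. For a generalized
inverse `G` of `A` this says `(1 - AG) V (1 - GA) = 0`, that is `V = ((1 - AG) V G) A + A (G V)`.
-/

open Polynomial Matrix
open MvPolynomial (pderiv vanishingIdeal mem_vanishingIdeal_iff)

theorem MvPolynomial.derivative_aeval {R σ : Type*} [CommSemiring R] [Fintype σ] [DecidableEq σ]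
    (γ : σ → R[X]) (g : MvPolynomial σ R) :
    derivative (aeval γ g) = ∑ i, aeval γ (pderiv i g) * derivative (γ i) := by
  induction g using MvPolynomial.induction_on with
  | C a => simp
  | add p q hp hq => simp [hp, hq, add_mul, Finset.sum_add_distrib]
  | mul_X p i hp =>
    simp only [map_mul, aeval_X, derivative_mul, hp, Finset.sum_mul, pderiv_mul, pderiv_X,
      map_add, add_mul, Finset.sum_add_distrib]
    congr 1
    · exact Finset.sum_congr rfl fun j _ => by ring
    · simp [Pi.single_apply]

theorem MvPolynomial.eval_aeval {R σ : Type*} [CommSemiring R] (γ : σ → Polynomial R)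
    (g : MvPolynomial σ R) (t : R) :
    (aeval γ g).eval t = eval (fun i => (γ i).eval t) g := by
  simpa using congr($(MvPolynomial.comp_aeval γ (Polynomial.aeval t)) g)

theorem MvPolynomial.sum_mul_eval_pderiv_eq_eval_derivative_aeval {R σ : Type*} [CommSemiring R]
    [Fintype σ] [DecidableEq σ] (γ : σ → R[X]) (g : MvPolynomial σ R) :
    ∑ i, (derivative (γ i)).eval 0 * MvPolynomial.eval (fun i => (γ i).eval 0) (pderiv i g) =
      (derivative (MvPolynomial.aeval γ g)).eval 0 := by
  simp only [MvPolynomial.derivative_aeval, Polynomial.eval_finsetSum, Polynomial.eval_mul,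
    MvPolynomial.eval_aeval, mul_comm]

theorem Matrix.det_updateCol_one {n R : Type*} [Fintype n] [DecidableEq n] [CommRing R]
    (j : n) (b : n → R) : (updateCol 1 j b).det = b j := by
  rw [← cramer_apply, cramer_one]; rfl

theorem Matrix.eval_zero_derivative_det_map_add_X_smul {n R : Type*} [Fintype n] [DecidableEq n]
    [CommRing R] (M N : Matrix n n R) (j : n) (hM : ∀ i, M i j = 0) :
    (derivative (M.map C + (X : R[X]) • N.map C).det).eval 0 =
      (M.updateCol j fun i => N i j).det := by
  have hcol : M.map C + (X : R[X]) • N.map C =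
      (M.map C + (X : R[X]) • N.map C).updateCol j ((X : R[X]) • fun i => C (N i j)) := by
    ext i k
    by_cases hk : k = j
    · subst hk; simp [hM]
    · simp [updateCol_ne hk]
  rw [hcol, det_updateCol_smul, derivative_mul, derivative_X, one_mul, eval_add, eval_mul, eval_X,
    zero_mul, add_zero, ← coe_evalRingHom, RingHom.map_det]
  congr 1
  ext i k
  by_cases hk : k = j
  · subst hk; simp
  · simp [updateCol_ne hk]

theorem Matrix.det_eq_zero_of_rank_lt {n K : Type*} [Fintype n] [DecidableEq n] [Field K]
    {M : Matrix n n K} (h : M.rank < Fintype.card n) : M.det = 0 := by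
  by_contra hM
  exact h.ne (M.rank_of_isUnit ((isUnit_iff_isUnit_det M).mpr (Ne.isUnit hM)))

theorem Matrix.exists_mul_mul_eq_one_and_mul_mul_mul_eq_self {K m n : Type*} [Field K]
    [Fintype m] [Fintype n] [DecidableEq m] [DecidableEq n] {A : Matrix m n K} {r : ℕ}
    (hA : A.rank = r) : ∃ (R : Matrix (Fin r) m K) (S : Matrix n (Fin r) K),
      R * A * S = 1 ∧ A * (S * R) * A = A := by
  let f := A.mulVecLin
  let e : LinearMap.range f ≃ₗ[K] (Fin r → K) := (Module.finBasisOfFinrankEq K _ hA).equivFun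
  let ι : (Fin r → K) →ₗ[K] (m → K) := (LinearMap.range f).subtype ∘ₗ e.symm.toLinearMap
  let π : (n → K) →ₗ[K] (Fin r → K) := e.toLinearMap ∘ₗ f.rangeRestrict
  obtain ⟨l, hl⟩ := ι.exists_leftInverse_of_injective
    (LinearMap.ker_eq_bot.mpr (Subtype.val_injective.comp e.symm.injective))
  obtain ⟨s, hs⟩ := π.exists_rightInverse_of_surjective
    (LinearMap.range_eq_top.mpr (e.surjective.comp f.surjective_rangeRestrict))
  set B := LinearMap.toMatrix' ι
  set C := LinearMap.toMatrix' π
  have hBC : A = B * C := by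
    have hιπ : ι ∘ₗ π = A.mulVecLin := by
      refine LinearMap.ext fun x => ?_
      simp [ι, π, f]
    rw [← LinearMap.toMatrix'_comp, hιπ, ← Matrix.toLin'_apply', LinearMap.toMatrix'_toLin']
  have hlι : LinearMap.toMatrix' l * B = 1 := by
    rw [← LinearMap.toMatrix'_comp, hl, LinearMap.toMatrix'_id]
  have hπs : C * LinearMap.toMatrix' s = 1 := by
    rw [← LinearMap.toMatrix'_comp, hs, LinearMap.toMatrix'_id]
  refine ⟨LinearMap.toMatrix' l, LinearMap.toMatrix' s, ?_, ?_⟩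
  · calc LinearMap.toMatrix' l * A * LinearMap.toMatrix' s
        = (LinearMap.toMatrix' l * B) * (C * LinearMap.toMatrix' s) := by
          simp only [hBC, Matrix.mul_assoc]
      _ = 1 := by rw [hlι, hπs, Matrix.one_mul]
  · calc A * (LinearMap.toMatrix' s * LinearMap.toMatrix' l) * A
        = B * ((C * LinearMap.toMatrix' s) * (LinearMap.toMatrix' l * B)) * C := by
          simp only [hBC, Matrix.mul_assoc]
      _ = A := by rw [hπs, hlι, Matrix.one_mul, Matrix.mul_one, hBC]

theorem Matrix.exists_eq_mul_add_mul_of_dotProduct_mulVec_eq_zero {R m n : Type*} [CommRing R]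
    [Fintype m] [Fintype n] [DecidableEq m] [DecidableEq n] {A : Matrix m n R} {G : Matrix n m R}
    (hG : A * G * A = A) {V : Matrix m n R}
    (hV : ∀ e f, e ᵥ* A = 0 → A *ᵥ f = 0 → e ⬝ᵥ V *ᵥ f = 0) :
    ∃ C C', V = C * A + A * C' := by
  have hcompress : (1 - A * G) * V * (1 - G * A) = 0 := by
    ext i j
    have hrow : (1 - A * G : Matrix m m R) i ᵥ* A = 0 := by
      rw [← mul_apply_eq_vecMul, Matrix.sub_mul, Matrix.one_mul, hG, sub_self]; rfl
    have hcol : A *ᵥ (fun k => (1 - G * A : Matrix n n R) k j) = 0 := by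
      have : A * (1 - G * A) = 0 := by
        rw [Matrix.mul_sub, Matrix.mul_one, ← Matrix.mul_assoc, hG, sub_self]
      funext i
      exact congr_fun₂ this i j
    rw [mul_apply_eq_vecMul, mul_apply_eq_vecMul]
    exact (dotProduct_mulVec _ _ _).symm.trans (hV _ _ hrow hcol)
  refine ⟨(1 - A * G) * V * G, G * V, ?_⟩
  calc V = V - (1 - A * G) * V * (1 - G * A) := by rw [hcompress, sub_zero]
    _ = (1 - A * G) * V * G * A + A * (G * V) := by
      simp only [Matrix.sub_mul, Matrix.mul_sub, Matrix.one_mul, Matrix.mul_one, Matrix.mul_assoc]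
      abel

theorem Matrix.of_finCons_mul_mul_of_finCons_eq_updateCol_one {K m n : Type*} [CommRing K]
    [Fintype m] [Fintype n] {r : ℕ} {A : Matrix m n K} {R₁ : Matrix (Fin r) m K}
    {S₁ : Matrix n (Fin r) K} (hRS : R₁ * A * S₁ = 1) {e : m → K} {f : n → K} (he : e ᵥ* A = 0)
    (hf : A *ᵥ f = 0) :
    of (Fin.cons e R₁) * A * of (fun j => Fin.cons (f j) (S₁ j)) =
      (1 : Matrix (Fin (r + 1)) (Fin (r + 1)) K).updateCol 0 0 := by
  ext k l
  rw [mul_apply_eq_vecMul, mul_apply_eq_vecMul]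
  cases k using Fin.cases with
  | zero =>
    change (e ᵥ* A ᵥ* of (fun j => Fin.cons (f j) (S₁ j))) l = _
    cases l using Fin.cases <;> simp [he, (Fin.succ_ne_zero _).symm]
  | succ s =>
    cases l using Fin.cases with
    | zero =>
      change (R₁ s ᵥ* A) ⬝ᵥ f = _
      simp [← dotProduct_mulVec, hf]
    | succ t =>
      change ((R₁ * A) s ᵥ* S₁) t = _
      rw [← mul_apply_eq_vecMul, hRS]
      simp [one_apply]

section TangentSpace

variable {K σ : Type*} [Field K] [Fintype σ] [DecidableEq σ]

theorem velocity_mem_tangentSpaceAt [Infinite K] {V : Set (σ → K)} (γ : σ → K[X])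
    (hγ : ∀ t, (fun i => (γ i).eval t) ∈ V) :
    (fun i => (derivative (γ i)).eval 0) ∈ tangentSpaceAt K V (fun i => (γ i).eval 0) := by
  intro g hg
  have hγg : MvPolynomial.aeval γ g = 0 := Polynomial.funext fun t => by
    rw [MvPolynomial.eval_aeval, Polynomial.eval_zero]
    exact (mem_vanishingIdeal_iff.mp hg) _ (hγ t)
  rw [MvPolynomial.sum_mul_eval_pderiv_eq_eval_derivative_aeval, hγg, derivative_zero,
    Polynomial.eval_zero]

theorem mem_tangentSpaceAt_of_forall_add_smul_add_sq_smul_mem [Infinite K] {V : Set (σ → K)}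
    {p v w : σ → K} (h : ∀ t : K, p + t • v + t ^ 2 • w ∈ V) : v ∈ tangentSpaceAt K V p := by
  have := velocity_mem_tangentSpaceAt (V := V) (fun i => C (p i) + C (v i) * X + C (w i) * X ^ 2)
    fun t => by
      convert h t using 1
      ext i
      simp only [eval_add, eval_C, eval_mul, eval_X, eval_pow, Pi.add_apply, Pi.smul_apply,
        smul_eq_mul]
      ring
  simpa using this

theorem eval_derivative_aeval_line_eq_zero {V : Set (σ → K)} {p v : σ → K}
    (hv : v ∈ tangentSpaceAt K V p) {g : MvPolynomial σ K} (hg : g ∈ vanishingIdeal K V) :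
    (derivative (MvPolynomial.aeval (fun i => C (p i) + C (v i) * X) g)).eval 0 = 0 := by
  rw [← MvPolynomial.sum_mul_eval_pderiv_eq_eval_derivative_aeval]
  simpa using hv g hg

end TangentSpace

section Determinantal

variable {K m n ι : Type*} [Field K] [Fintype m] [Fintype n] [Fintype ι] [DecidableEq ι]

variable (K m n) in
def determinantalVariety (r : ℕ) : Set (m × n → K) :=
  {v | (Matrix.of fun i j => v (i, j)).rank ≤ r}

noncomputable def generalizedMinor (R : Matrix ι m K) (S : Matrix n ι K) :
    MvPolynomial (m × n) K :=
  (R.map (algebraMap K (MvPolynomial (m × n) K)) * Matrix.mvPolynomialX m n K *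
    S.map (algebraMap K (MvPolynomial (m × n) K))).det

theorem aeval_generalizedMinor {T : Type*} [CommRing T] [Algebra K T] (R : Matrix ι m K)
    (S : Matrix n ι K) (x : m × n → T) :
    MvPolynomial.aeval x (generalizedMinor R S) =
      (R.map (algebraMap K T) * Matrix.of (fun i j => x (i, j)) * S.map (algebraMap K T)).det := by
  rw [generalizedMinor, AlgHom.map_det, AlgHom.mapMatrix_apply]
  congr 1
  ext k l
  simp [Matrix.mul_apply, Matrix.mvPolynomialX_apply]

theorem generalizedMinor_mem_vanishingIdeal {r : ℕ} (hr : r < Fintype.card ι) (R : Matrix ι m K)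
    (S : Matrix n ι K) :
    generalizedMinor R S ∈ vanishingIdeal K (determinantalVariety K m n r) := by
  refine mem_vanishingIdeal_iff.mpr fun x hx => ?_
  rw [aeval_generalizedMinor, Algebra.algebraMap_self, RingHom.coe_id, Matrix.map_id,
    Matrix.map_id]
  refine Matrix.det_eq_zero_of_rank_lt (lt_of_le_of_lt ?_ hr)
  calc (R * Matrix.of (fun i j => x (i, j)) * S).rank
      ≤ (R * Matrix.of (fun i j => x (i, j))).rank := Matrix.rank_mul_le_left _ _
    _ ≤ r := (Matrix.rank_mul_le_right _ _).trans hx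

theorem dotProduct_mulVec_eq_zero_of_mem_tangentSpaceAt [DecidableEq m] [DecidableEq n] {r : ℕ}
    {A : Matrix m n K} {R₁ : Matrix (Fin r) m K} {S₁ : Matrix n (Fin r) K} (hRS : R₁ * A * S₁ = 1)
    {e : m → K} {f : n → K} (he : e ᵥ* A = 0) (hf : A *ᵥ f = 0) {v : m × n → K}
    (hv : v ∈ tangentSpaceAt K (determinantalVariety K m n r) fun p => A p.1 p.2) :
    e ⬝ᵥ (Matrix.of fun i j => v (i, j)) *ᵥ f = 0 := by
  set V : Matrix m n K := Matrix.of fun i j => v (i, j)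
  let R : Matrix (Fin (r + 1)) m K := Matrix.of (Fin.cons e R₁)
  let S : Matrix n (Fin (r + 1)) K := Matrix.of fun j => Fin.cons (f j) (S₁ j)
  have hRAS : R * A * S = (1 : Matrix (Fin (r + 1)) (Fin (r + 1)) K).updateCol 0 0 :=
    of_finCons_mul_mul_of_finCons_eq_updateCol_one hRS he hf
  have hline := eval_derivative_aeval_line_eq_zero hv
    (generalizedMinor_mem_vanishingIdeal (by simp) R S)
  have hpath : R.map C * (Matrix.of fun i j => C (A i j) + C (v (i, j)) * X) *
      S.map C = (R * A * S).map C + (X : K[X]) • (R * V * S).map C := by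
    have : (Matrix.of fun i j => C (A i j) + C (v (i, j)) * X) =
        A.map C + (X : K[X]) • V.map C := by
      ext i j : 1
      simp only [Matrix.of_apply, Matrix.add_apply, Matrix.map_apply, Matrix.smul_apply,
        smul_eq_mul, V]
      ring
    rw [this, Matrix.mul_add, Matrix.add_mul, Matrix.mul_smul, Matrix.smul_mul, Matrix.map_mul,
      Matrix.map_mul, Matrix.map_mul, Matrix.map_mul]
  rw [aeval_generalizedMinor, Polynomial.algebraMap_eq, hpath,
    Matrix.eval_zero_derivative_det_map_add_X_smul _ _ 0 (by simp [hRAS]), hRAS,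
    Matrix.updateCol_idem, Matrix.det_updateCol_one] at hline
  rw [← hline, Matrix.mul_apply, dotProduct_mulVec]
  rfl

end Determinantal

/-- The tangent space to the determinantal variety `M_r ⊆ K^{m×n}` at a
matrix `A` of rank exactly `r` is `{CA + AC'}`. -/
theorem tangentSpace_determinantal
    {K : Type*} [Field K] [IsAlgClosed K] {m n r : ℕ}
    (A : Matrix (Fin m) (Fin n) K) (hA : A.rank = r) :
    tangentSpaceAt K
        {v : Fin m × Fin n → K | (Matrix.of fun i j => v (i, j)).rank ≤ r}
        (fun p => A p.1 p.2) =
      {v : Fin m × Fin n → K |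
        ∃ (C : Matrix (Fin m) (Fin m) K) (C' : Matrix (Fin n) (Fin n) K),
          v = fun p => (C * A + A * C') p.1 p.2} := by
  ext v
  constructor
  · intro hv
    obtain ⟨R, S, hRAS, hG⟩ := exists_mul_mul_eq_one_and_mul_mul_mul_eq_self hA
    obtain ⟨C, C', hV⟩ := exists_eq_mul_add_mul_of_dotProduct_mulVec_eq_zero hG
      fun e f he hf => dotProduct_mulVec_eq_zero_of_mem_tangentSpaceAt hRAS he hf hv
    exact ⟨C, C', funext fun p => congr_fun₂ hV p.1 p.2⟩
  · rintro ⟨C, C', rfl⟩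
    refine mem_tangentSpaceAt_of_forall_add_smul_add_sq_smul_mem
      (w := fun p => (C * A * C') p.1 p.2) fun t => ?_
    have hcurve : (1 + t • C) * A * (1 + t • C') =
        A + t • (C * A + A * C') + t ^ 2 • (C * A * C') := by
      simp only [Matrix.add_mul, Matrix.mul_add, Matrix.one_mul, Matrix.mul_one, Matrix.smul_mul,
        Matrix.mul_smul, smul_add, smul_smul, Matrix.mul_assoc, sq]
      abel
    calc _ = ((1 + t • C) * A * (1 + t • C')).rank := by rw [hcurve]; rfl
      _ ≤ A.rank := (rank_mul_le_left _ _).trans (rank_mul_le_right _ _)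
      _ = r := hA
end

section
/- Let K be an algebraically closed field and L ≤ K^{m×n} a linear subspace of matrices such that every matrix in L has rank at most r. Then SR(L) ≤ 2r. -/
open scoped BigOperators

/-! Let `A ∈ L` have maximal rank `r₀ ≤ r`, and let `G A Y = 1` be an invertible `r₀ × r₀`
compression of `A`. If `x A = 0` and `A y = 0`, then `x B y = 0` for every `B ∈ L`: bordering
`G (A + t B) Y` by the row `t⁻¹ x` and the column `y` gives a square matrix `F₀ + t F₁` of size
`r₀ + 1` but rank at most `r₀`, so `det (F₀ + t F₁)` vanishes identically (`K` is infinite), while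
`det F₀ = x B y`. Consequently, with the projection `Π = A Y G` onto the column space of `A`,
every `B ∈ L` equals `Π B + (1 - Π) B (Y G A)`, a sum of `r₀` slices in the row variable and `r₀`
slices in the column variable. -/

open Module Matrix Polynomial

theorem LinearMap.exists_comp_comp_eq_id_and_comp_comp_comp_eq_self
    {K V W : Type*} [Field K] [AddCommGroup V] [Module K V] [AddCommGroup W] [Module K W]
    (f : V →ₗ[K] W) {r : ℕ} [FiniteDimensional K (LinearMap.range f)]
    (hr : finrank K (LinearMap.range f) = r) :
    ∃ (g : W →ₗ[K] Fin r → K) (s : (Fin r → K) →ₗ[K] V),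
      g ∘ₗ f ∘ₗ s = LinearMap.id ∧ f ∘ₗ s ∘ₗ g ∘ₗ f = f := by
  let e := (Module.finBasisOfFinrankEq K _ hr).equivFun
  obtain ⟨π, hπ⟩ := (LinearMap.range f).subtype.exists_leftInverse_of_injective
    (Submodule.ker_subtype _)
  obtain ⟨s, hs⟩ := f.rangeRestrict.exists_rightInverse_of_surjective f.range_rangeRestrict
  have hπ_apply (w : LinearMap.range f) : π w = w := LinearMap.congr_fun hπ w
  have hs_apply (w : LinearMap.range f) : f.rangeRestrict (s w) = w := LinearMap.congr_fun hs w
  refine ⟨e.toLinearMap ∘ₗ π, s ∘ₗ e.symm.toLinearMap, LinearMap.ext fun c => ?_,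
    LinearMap.ext fun v => ?_⟩
  · change e (π (f.rangeRestrict (s (e.symm c)))) = c
    rw [hs_apply, hπ_apply, e.apply_symm_apply]
  · change (f.rangeRestrict (s (e.symm (e (π (f.rangeRestrict v))))) : W) = f v
    rw [hπ_apply, e.symm_apply_apply, hs_apply, LinearMap.codRestrict_apply]

namespace Matrix

theorem exists_mul_mul_eq_one_and_mul_mul_mul_eq_self_s8 {K m n : Type*} [Field K]
    [Fintype m] [DecidableEq m] [Fintype n] [DecidableEq n] (A : Matrix m n K) :
    ∃ (G : Matrix (Fin A.rank) m K) (Y : Matrix n (Fin A.rank) K),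
      G * A * Y = 1 ∧ A * Y * G * A = A := by
  obtain ⟨g, s, hgfs, hfsgf⟩ := (toLin' A).exists_comp_comp_eq_id_and_comp_comp_comp_eq_self
    (r := A.rank) rfl
  refine ⟨LinearMap.toMatrix' g, LinearMap.toMatrix' s, ?_, ?_⟩
  · simpa [LinearMap.toMatrix'_comp, Matrix.mul_assoc] using congrArg LinearMap.toMatrix' hgfs
  · simpa [LinearMap.toMatrix'_comp, Matrix.mul_assoc] using congrArg LinearMap.toMatrix' hfsgf

theorem det_eq_zero_of_forall_ne_zero_det_add_smul_eq_zero {K ι : Type*} [Field K]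
    [Infinite K] [Fintype ι] [DecidableEq ι] (M N : Matrix ι ι K)
    (h : ∀ t : K, t ≠ 0 → (M + t • N).det = 0) : M.det = 0 := by
  set p : K[X] := (M.map C + (X : K[X]) • N.map C).det
  have hp (t : K) : p.eval t = (M + t • N).det := by
    rw [← coe_evalRingHom, RingHom.map_det]
    congr 1
    ext i j
    simp only [RingHom.mapMatrix_apply, coe_evalRingHom, map_apply, add_apply, smul_apply,
      smul_eq_mul, X_mul_C, eval_add, eval_C, eval_mul, eval_X]
    ring
  have hp0 : p = 0 := by
    refine p.eq_zero_of_infinite_isRoot ((Set.finite_singleton (0 : K)).infinite_compl.mono ?_)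
    intro t ht
    rw [Set.mem_ofPred_eq, IsRoot.def, hp]
    exact h t ht
  simpa [hp0] using (hp 0).symm

theorem dotProduct_mulVec_eq_zero_of_forall_rank_add_smul_le {K m n ι : Type*} [Field K]
    [Infinite K] [Fintype m] [Fintype n] [Fintype ι] [DecidableEq ι]
    {A B : Matrix m n K} {G : Matrix ι m K} {Y : Matrix n ι K} (hGAY : G * A * Y = 1)
    (hrank : ∀ t : K, (A + t • B).rank ≤ Fintype.card ι)
    {x : m → K} {y : n → K} (hx : x ᵥ* A = 0) (hy : A *ᵥ y = 0) :
    x ⬝ᵥ B *ᵥ y = 0 := by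
  set X := replicateRow Unit x
  set Z := replicateCol Unit y
  have hXA : X * A = 0 := by rw [← replicateRow_vecMul, hx, replicateRow_zero]
  have hAZ : A * Z = 0 := by rw [← replicateCol_mulVec, hy, replicateCol_zero]
  set F₀ := fromBlocks (1 : Matrix ι ι K) 0 (X * B * Y) (X * B * Z)
  set F₁ := fromBlocks (G * B * Y) (G * B * Z) 0 0
  have hbordered (t : K) (ht : t ≠ 0) :
      fromRows G (t⁻¹ • X) * (A + t • B) * fromCols Y Z = F₀ + t • F₁ := by
    rw [fromRows_mul, fromRows_mul_fromCols, fromBlocks_smul, fromBlocks_add, fromBlocks_inj]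
    simp only [Matrix.mul_add, Matrix.add_mul, Matrix.mul_smul, Matrix.smul_mul, hGAY, hXA,
      Matrix.mul_assoc _ A Z, hAZ, smul_smul, mul_inv_cancel₀ ht]
    simp
  have hdet (t : K) (ht : t ≠ 0) : (F₀ + t • F₁).det = 0 := by
    by_contra hne
    have hle : (F₀ + t • F₁).rank ≤ Fintype.card ι := by
      rw [← hbordered t ht]
      exact (rank_mul_le_left _ _).trans ((rank_mul_le_right _ _).trans (hrank t))
    rw [rank_of_det_ne_zero hne, Fintype.card_sum, Fintype.card_unit] at hle
    omega
  have := det_eq_zero_of_forall_ne_zero_det_add_smul_eq_zero F₀ F₁ hdet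
  rwa [det_fromBlocks_zero₁₂, det_one, one_mul, det_unique, ← replicateRow_vecMul,
    replicateRow_mul_replicateCol_apply, ← dotProduct_mulVec] at this

theorem mul_mul_eq_zero_of_forall_rank_add_smul_le {K m n ι p q : Type*} [Field K]
    [Infinite K] [Fintype m] [Fintype n] [Fintype ι] [DecidableEq ι]
    {A B : Matrix m n K} {G : Matrix ι m K} {Y : Matrix n ι K} (hGAY : G * A * Y = 1)
    (hrank : ∀ t : K, (A + t • B).rank ≤ Fintype.card ι)
    {X : Matrix p m K} {Z : Matrix n q K} (hX : X * A = 0) (hZ : A * Z = 0) :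
    X * B * Z = 0 := by
  ext i j
  have key := dotProduct_mulVec_eq_zero_of_forall_rank_add_smul_le hGAY hrank
    (x := X i) (y := fun k => Z k j)
    (by rw [← mul_apply_eq_vecMul, hX]; rfl)
    (by ext k; simpa [mulVec, dotProduct, mul_apply] using congrFun₂ hZ k j)
  rw [zero_apply, ← key, dotProduct_mulVec, ← mul_apply_eq_vecMul]
  rfl

theorem eq_mul_add_mul_of_forall_rank_add_smul_le {K m n ι : Type*} [Field K]
    [Infinite K] [Fintype m] [DecidableEq m] [Fintype n] [DecidableEq n] [Fintype ι]
    [DecidableEq ι]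
    {A B : Matrix m n K} {G : Matrix ι m K} {Y : Matrix n ι K} (hGAY : G * A * Y = 1)
    (hAYGA : A * Y * G * A = A) (hrank : ∀ t : K, (A + t • B).rank ≤ Fintype.card ι) :
    B = A * Y * (G * B) + (1 - A * Y * G) * B * Y * (G * A) := by
  have h := mul_mul_eq_zero_of_forall_rank_add_smul_le hGAY hrank
    (X := 1 - A * Y * G) (Z := 1 - Y * G * A)
    (by rw [Matrix.sub_mul, Matrix.one_mul, hAYGA, sub_self])
    (by rw [Matrix.mul_sub, Matrix.mul_one, ← Matrix.mul_assoc, ← Matrix.mul_assoc, hAYGA,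
      sub_self])
  simp only [Matrix.mul_sub, Matrix.sub_mul, Matrix.mul_one, Matrix.one_mul, Matrix.mul_assoc]
    at h ⊢
  rw [← sub_eq_zero, ← h]
  abel

theorem exists_mem_forall_rank_le {K m n : Type*} [Field K] [Fintype m] [Fintype n]
    {S : Set (Matrix m n K)} (hS : S.Nonempty) : ∃ A ∈ S, ∀ B ∈ S, B.rank ≤ A.rank := by
  have hbdd : BddAbove (rank '' S) :=
    ⟨Fintype.card n, by rintro _ ⟨B, -, rfl⟩; exact rank_le_card_width B⟩
  obtain ⟨A, hA, hAsup⟩ := Nat.sSup_mem (hS.image _) hbdd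
  exact ⟨A, hA, fun B hB => hAsup ▸ le_csSup hbdd (Set.mem_image_of_mem _ hB)⟩

end Matrix

theorem sliceRankLE_of_forall_eq_mul_add_mul {F : Type*} [Field F] {n1 n2 n3 r1 r2 r : ℕ}
    (B : Fin n3 → Matrix (Fin n1) (Fin n2) F) (U : Matrix (Fin n1) (Fin r1) F)
    (V : Matrix (Fin r2) (Fin n2) F) (R : Fin n3 → Matrix (Fin r1) (Fin n2) F)
    (S : Fin n3 → Matrix (Fin n1) (Fin r2) F) (hB : ∀ k, B k = U * R k + S k * V)
    (hr : r1 + r2 ≤ r) : SliceRankLE (fun i j k => B k i j) r := by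
  refine ⟨r1, r2, r - (r1 + r2), by omega, fun s i => U i s, fun s j k => R k s j,
    fun s j => V s j, fun s i k => S k i s, 0, 0, fun i j k => ?_⟩
  simp [hB k, Matrix.mul_apply, mul_comm]

/-- A matrix space all of whose members have rank at most `r` has slice
rank at most `2r`. -/
theorem matrixSliceRank_le_of_rank_le
    {K : Type*} [Field K] [IsAlgClosed K] {m n r : ℕ}
    (L : Submodule K (Matrix (Fin m) (Fin n) K))
    (hL : ∀ A ∈ L, Matrix.rank A ≤ r) :
    matrixSliceRank L ≤ 2 * r := by
  refine Nat.sInf_le fun d B _ hspan => ?_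
  have hB (k : Fin d) : B k ∈ L := hspan ▸ Submodule.subset_span ⟨k, rfl⟩
  obtain ⟨A, hA, hmax⟩ :=
    exists_mem_forall_rank_le (S := (L : Set (Matrix (Fin m) (Fin n) K))) ⟨0, L.zero_mem⟩
  obtain ⟨G, Y, hGAY, hAYGA⟩ := A.exists_mul_mul_eq_one_and_mul_mul_mul_eq_self_s8
  have hrank (k : Fin d) (t : K) : (A + t • B k).rank ≤ Fintype.card (Fin A.rank) := by
    rw [Fintype.card_fin]
    exact hmax _ (L.add_mem hA (L.smul_mem t (hB k)))
  refine sliceRankLE_of_forall_eq_mul_add_mul B (A * Y) (G * A) _ _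
    (fun k => eq_mul_add_mul_of_forall_rank_add_smul_le hGAY hAYGA (hrank k)) ?_
  linarith [hL A hA]
end

section
/- Let F be any field and let T ∈ F^{3×3×3} be the Levi-Civita tensor, i.e., the 3-tensor whose trilinear form is the 3×3 determinant polynomial T(x,y,z) = det of the matrix with rows (x_1,x_2,x_3), (y_1,y_2,y_3), (z_1,z_2,z_3). Then SR(T) = 3. -/
open scoped BigOperators

/-! If the determinant tensor had a slice decomposition with at most two slices, one of the three
slice types would be absent; by cyclic symmetry of the determinant we may assume it is the
`z`-type. The `x`-slices and `y`-slices then vanish on the common kernels `X` and `Y` of their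
linear forms, of dimensions at least `3 - r₁` and `3 - r₂`. On `X × Y` the bilinear map
`(x, y) ↦ T(x, y, ·)`, which is the cross product, therefore vanishes identically. But the cross
product of two nonzero vectors vanishes only when they are proportional, which forces
`dim X + dim Y ≤ 3 < 4 ≤ (3 - r₁) + (3 - r₂)`. -/

open Matrix

section SliceDecomposition

variable {F : Type*} [Field F] {n1 n2 n3 : ℕ}

def HasSliceDecomp (T : Fin n1 → Fin n2 → Fin n3 → F) (r1 r2 r3 : ℕ) : Prop :=
  ∃ (a : Fin r1 → Fin n1 → F) (g1 : Fin r1 → Fin n2 → Fin n3 → F)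
    (b : Fin r2 → Fin n2 → F) (g2 : Fin r2 → Fin n1 → Fin n3 → F)
    (c : Fin r3 → Fin n3 → F) (g3 : Fin r3 → Fin n1 → Fin n2 → F),
    ∀ i j k, T i j k =
      (∑ s, a s i * g1 s j k) + (∑ s, b s j * g2 s i k) + (∑ s, c s k * g3 s i j)

theorem sliceRankLE_iff {T : Fin n1 → Fin n2 → Fin n3 → F} {r : ℕ} :
    SliceRankLE T r ↔ ∃ r1 r2 r3, r1 + r2 + r3 = r ∧ HasSliceDecomp T r1 r2 r3 :=
  Iff.rfl

theorem HasSliceDecomp.rotate {T : Fin n1 → Fin n2 → Fin n3 → F} {r1 r2 r3 : ℕ}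
    (h : HasSliceDecomp T r1 r2 r3) : HasSliceDecomp (fun j k i => T i j k) r2 r3 r1 := by
  obtain ⟨a, g1, b, g2, c, g3, h⟩ := h
  exact ⟨b, fun s k i => g2 s i k, c, fun s j i => g3 s i j, a, g1,
    fun j k i => (h i j k).trans (by ring)⟩

theorem sliceRankLE_left (T : Fin n1 → Fin n2 → Fin n3 → F) : SliceRankLE T n1 :=
  ⟨n1, 0, 0, rfl, fun s i => if i = s then 1 else 0, T, Fin.elim0, Fin.elim0, Fin.elim0,
    Fin.elim0, fun i j k => by simp⟩

def tensorBilin (T : Fin n1 → Fin n2 → Fin n3 → F) (x : Fin n1 → F) (y : Fin n2 → F) :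
    Fin n3 → F :=
  fun k => ∑ i, ∑ j, T i j k * x i * y j

theorem sum_sum_mul_eq_zero_of_mulVec_eq_zero {m n r : ℕ} (a : Matrix (Fin r) (Fin m) F)
    (g : Fin r → Fin n → F) {x : Fin m → F} (hx : a *ᵥ x = 0) (y : Fin n → F) :
    ∑ i, ∑ j, (∑ s, a s i * g s j) * x i * y j = 0 := by
  calc ∑ i, ∑ j, (∑ s, a s i * g s j) * x i * y j
      = ∑ j, (∑ s, (a *ᵥ x) s * g s j) * y j := by
        simp only [mulVec, dotProduct, Finset.sum_mul]
        rw [Finset.sum_comm]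
        refine Finset.sum_congr rfl fun j _ => ?_
        rw [Finset.sum_comm]
        exact Finset.sum_congr rfl fun s _ => Finset.sum_congr rfl fun i _ => by ring
    _ = 0 := by simp [hx]

theorem HasSliceDecomp.tensorBilin_eq_zero {T : Fin n1 → Fin n2 → Fin n3 → F} {r1 r2 : ℕ}
    (h : HasSliceDecomp T r1 r2 0) :
    ∃ (a : Matrix (Fin r1) (Fin n1) F) (b : Matrix (Fin r2) (Fin n2) F),
      ∀ x ∈ LinearMap.ker a.mulVecLin, ∀ y ∈ LinearMap.ker b.mulVecLin, tensorBilin T x y = 0 := by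
  obtain ⟨a, g1, b, g2, _, _, h⟩ := h
  refine ⟨a, b, fun x hx y hy => funext fun k => ?_⟩
  calc tensorBilin T x y k
      = ∑ i, ∑ j, (∑ s, a s i * g1 s j k) * x i * y j
          + ∑ j, ∑ i, (∑ s, b s j * g2 s i k) * y j * x i := by
        simp only [tensorBilin, h, Fin.sum_univ_zero, add_zero, add_mul, Finset.sum_add_distrib]
        rw [Finset.sum_comm (γ := Fin n2)]
        simp only [mul_right_comm]
    _ = 0 := by
      rw [sum_sum_mul_eq_zero_of_mulVec_eq_zero a _ hx,
        sum_sum_mul_eq_zero_of_mulVec_eq_zero b _ hy, add_zero]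

theorem le_finrank_ker_mulVecLin {m n : ℕ} (a : Matrix (Fin m) (Fin n) F) :
    n - m ≤ Module.finrank F (LinearMap.ker a.mulVecLin) := by
  have := a.mulVecLin.finrank_range_add_finrank_ker
  have := (LinearMap.range a.mulVecLin).finrank_le
  simp only [Module.finrank_fin_fun] at *
  omega

end SliceDecomposition

section LeviCivita

variable {F : Type*} [Field F]

theorem finrank_le_one_of_cross_eq_zero {X : Submodule F (Fin 3 → F)} {y : Fin 3 → F}
    (hy : y ≠ 0) (h : ∀ x ∈ X, x ⨯₃ y = 0) : Module.finrank F X ≤ 1 := by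
  have hX : X ≤ F ∙ y := fun x hx => by
    have hdep : ¬LinearIndependent F ![y, x] := by
      rw [← crossProduct_ne_zero_iff_linearIndependent, not_not, ← cross_anticomm, h x hx, neg_zero]
    rw [LinearIndependent.pair_iff' hy, not_forall_not] at hdep
    obtain ⟨c, rfl⟩ := hdep
    exact Submodule.smul_mem _ c (Submodule.mem_span_singleton_self y)
  exact (Submodule.finrank_mono hX).trans (finrank_span_singleton hy).le

theorem finrank_add_finrank_le_of_cross_eq_zero {X Y : Submodule F (Fin 3 → F)}
    (h : ∀ x ∈ X, ∀ y ∈ Y, x ⨯₃ y = 0) : Module.finrank F X + Module.finrank F Y ≤ 3 := by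
  have hX3 := X.finrank_le
  have hY3 := Y.finrank_le
  rw [Module.finrank_fin_fun] at hX3 hY3
  rcases eq_or_ne Y ⊥ with rfl | hY
  · simpa using hX3
  rcases eq_or_ne X ⊥ with rfl | hX
  · simpa using hY3
  obtain ⟨y, hyY, hy⟩ := Y.ne_bot_iff.1 hY
  obtain ⟨x, hxX, hx⟩ := X.ne_bot_iff.1 hX
  have hX1 := finrank_le_one_of_cross_eq_zero hy fun x' hx' => h x' hx' y hyY
  have hY1 := finrank_le_one_of_cross_eq_zero hx fun y' hy' => by
    rw [← cross_anticomm, h x hxX y' hy', neg_zero]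
  omega

theorem tensorBilin_leviCivita (x y : Fin 3 → F) : tensorBilin (leviCivita F) x y = x ⨯₃ y := by
  funext k
  fin_cases k <;> simp [tensorBilin, leviCivita, cross_apply, Fin.sum_univ_three] <;> ring

theorem leviCivita_rotate : (fun j k i => leviCivita F i j k) = leviCivita F := by
  funext j k i
  fin_cases i <;> fin_cases j <;> fin_cases k <;> simp [leviCivita]

theorem not_hasSliceDecomp_leviCivita_of_right_eq_zero {r1 r2 : ℕ} (hr : r1 + r2 ≤ 2) :
    ¬HasSliceDecomp (leviCivita F) r1 r2 0 := fun h => by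
  obtain ⟨a, b, hab⟩ := h.tensorBilin_eq_zero
  have hdim := finrank_add_finrank_le_of_cross_eq_zero fun x hx y hy =>
    (tensorBilin_leviCivita x y).symm.trans (hab x hx y hy)
  have ha := le_finrank_ker_mulVecLin a
  have hb := le_finrank_ker_mulVecLin b
  omega

theorem not_hasSliceDecomp_leviCivita {r1 r2 r3 : ℕ} (hr : r1 + r2 + r3 ≤ 2) :
    ¬HasSliceDecomp (leviCivita F) r1 r2 r3 := fun h => by
  have h' := h.rotate
  rw [leviCivita_rotate] at h'
  have h'' := h'.rotate
  rw [leviCivita_rotate] at h''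
  obtain rfl | rfl | rfl : r3 = 0 ∨ r1 = 0 ∨ r2 = 0 := by omega
  · exact not_hasSliceDecomp_leviCivita_of_right_eq_zero (by omega) h
  · exact not_hasSliceDecomp_leviCivita_of_right_eq_zero (by omega) h'
  · exact not_hasSliceDecomp_leviCivita_of_right_eq_zero (by omega) h''

end LeviCivita

/-- The Levi-Civita tensor (the 3×3 determinant) has slice rank 3. -/
theorem sliceRank_leviCivita {F : Type*} [Field F] :
    sliceRank (leviCivita F) = 3 := by
  refine le_antisymm (Nat.sInf_le (sliceRankLE_left _)) (le_csInf ⟨3, sliceRankLE_left _⟩ ?_)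
  intro r hr
  obtain ⟨r1, r2, r3, rfl, h⟩ := sliceRankLE_iff.1 hr
  by_contra! hlt
  exact not_hasSliceDecomp_leviCivita (by omega) h
end
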